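/- In a network supported by a stable configuration with γ ≤ 1/2, no vertex is incident to any local bridge; and for any γ < 1, each vertex is incident to at most one local bridge. Formally: if u is connected to two distinct agents v, x such that u shares no common neighbor with v and no common neighbor with x, the configuration is not stable. -/

import Mathlib

open Finset

/-- An event configuration: each agent holds a finite list of events,
each event being a set of attendees together with a rate. -/
abbrev Config (V : Type*) := V → List (Finset V × ℝ)

section Game

variable {V : Type*} [Fintype V] [DecidableEq V]

/-- A valid strategy for `v`: every event contains `v` and has positive rate. -/
def ValidStrategy (v : V) (s : List (Finset V × ℝ)) : Prop :=
  ∀ e ∈ s, v ∈ e.1 ∧ 0 < e.2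

def ConfigValid (cfg : Config V) : Prop := ∀ v, ValidStrategy v (cfg v)

/-- The meeting rate between `u` and `v` supported by `w` (rate of events held by `w`
attended by both `u` and `v`). -/
def rateBy (cfg : Config V) (w u v : V) : ℝ :=
  ((cfg w).map (fun e => if u ∈ e.1 ∧ v ∈ e.1 then e.2 else 0)).sum

/-- The total meeting rate between `u` and `v`. -/
def meet (cfg : Config V) (u v : V) : ℝ := ∑ w, rateBy cfg w u v

/-- `u` and `v` are connected when their meeting rate is at least the threshold `1`. -/
def connected (cfg : Config V) (u v : V) : Prop := u ≠ v ∧ 1 ≤ meet cfg u v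

open scoped Classical in
/-- The set of agents connected to `v`. -/
noncomputable def nbrs (cfg : Config V) (v : V) : Finset V :=
  univ.filter (fun u => connected cfg u v)

/-- The cost of strategy `s` for agent `v` with parameters `b, c`. -/
def stratCost (b c : ℝ) (v : V) (s : List (Finset V × ℝ)) : ℝ :=
  (s.map (fun e => e.2 * (c * ((e.1.erase v).card : ℝ) + b))).sum

/-- Utility of agent `v`: benefit `a` per connection minus cost of own events. -/
noncomputable def utility (a b c : ℝ) (cfg : Config V) (v : V) : ℝ :=
  a * ((nbrs cfg v).card : ℝ) - stratCost b c v (cfg v)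

/-- A configuration is stable when it is valid and is a Nash equilibrium:
no agent can strictly improve her utility by a unilateral change of strategy. -/
def Stable (a b c : ℝ) (cfg : Config V) : Prop :=
  ConfigValid cfg ∧ ∀ v (s : List (Finset V × ℝ)), ValidStrategy v s →
    utility a b c (Function.update cfg v s) v ≤ utility a b c cfg v

/-- A configuration supports the graph `G` when adjacency coincides with connection. -/
def Supports (cfg : Config V) (G : SimpleGraph V) : Prop :=
  ∀ u v, G.Adj u v ↔ connected cfg u v

end Game

/-!
Stability rules out three deviations of a single agent: dropping an invitee who is not a
neighbour, inviting a non-neighbour to all of her events, and dropping some invitees while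
realising the remaining pairwise rates by nested events of smaller total rate. The first shows
that every invitee is a neighbour, so a local bridge is supported by its two endpoints only. The
third shows that some invitee attends all events of an agent, and that an active agent's total
rate `T` satisfies `c T < a`; by the second, an agent `p` is then connected to every `q` with
`meet p q + T ≥ 1`. For `γ ≤ 1/2` each endpoint of a bridge thus contributes less than `1/2` to
it. If `u` has two bridges `uv` and `ux` and `y` attends all of `u`'s events, one of the partners
`z ≠ y` meets `y` at least as often as `u` invites `z`. As `z` reaches the threshold with `u`, it
then reaches it with `y` by inviting `y` to all of its events, so `y` is a common neighbour of `u`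
and `z`.
-/

lemma ValidStrategy.rate_nonneg {V : Type*} {v : V} {s : List (Finset V × ℝ)}
    (hs : ValidStrategy v s) : ∀ e ∈ s, 0 ≤ e.2 :=
  fun e he => (hs e he).2.le

lemma ValidStrategy.mem {V : Type*} {v : V} {s : List (Finset V × ℝ)}
    (hs : ValidStrategy v s) : ∀ e ∈ s, v ∈ e.1 :=
  fun e he => (hs e he).1

def totalRate {V : Type*} (s : List (Finset V × ℝ)) : ℝ := (s.map fun e => e.2).sum

@[simp] lemma totalRate_nil {V : Type*} : totalRate ([] : List (Finset V × ℝ)) = 0 := rfl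

@[simp] lemma totalRate_cons {V : Type*} (e : Finset V × ℝ) (s : List (Finset V × ℝ)) :
    totalRate (e :: s) = e.2 + totalRate s := by
  simp [totalRate]

lemma totalRate_map_fst {V : Type*} (s : List (Finset V × ℝ)) (f : Finset V → Finset V) :
    totalRate (s.map fun e => (f e.1, e.2)) = totalRate s := by
  simp [totalRate, Function.comp_def]

section Rates

variable {V : Type*} [DecidableEq V]

def pairRate (s : List (Finset V × ℝ)) (u v : V) : ℝ :=
  (s.map fun e => if u ∈ e.1 ∧ v ∈ e.1 then e.2 else 0).sum

variable {s : List (Finset V × ℝ)}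

@[simp] lemma pairRate_cons (e : Finset V × ℝ) (s : List (Finset V × ℝ)) (u v : V) :
    pairRate (e :: s) u v = (if u ∈ e.1 ∧ v ∈ e.1 then e.2 else 0) + pairRate s u v := by
  simp [pairRate]

@[simp] lemma stratCost_cons (b c : ℝ) (p : V) (e : Finset V × ℝ)
    (s : List (Finset V × ℝ)) :
    stratCost b c p (e :: s) = e.2 * (c * (#(e.1.erase p) : ℝ) + b) + stratCost b c p s := by
  simp [stratCost]

lemma pairRate_comm (s : List (Finset V × ℝ)) (u v : V) :
    pairRate s u v = pairRate s v u := by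
  simp only [pairRate, and_comm]

lemma pairRate_nonneg (hs : ∀ e ∈ s, 0 ≤ e.2) (u v : V) : 0 ≤ pairRate s u v :=
  List.sum_nonneg <| by
    simp only [List.mem_map]
    rintro _ ⟨e, he, rfl⟩
    split_ifs
    exacts [hs e he, le_rfl]

lemma pairRate_le_pairRate_left (hs : ∀ e ∈ s, 0 ≤ e.2) {w : V} (hw : ∀ e ∈ s, w ∈ e.1)
    (u v : V) : pairRate s u v ≤ pairRate s w v := by
  unfold pairRate
  refine List.sum_le_sum fun e he => ?_
  by_cases h : u ∈ e.1 ∧ v ∈ e.1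
  · simp [h, hw e he]
  · rw [if_neg h]; split_ifs <;> simp [hs e he]

lemma pairRate_le_totalRate (hs : ∀ e ∈ s, 0 ≤ e.2) (u v : V) :
    pairRate s u v ≤ totalRate s := by
  unfold pairRate totalRate
  exact List.sum_le_sum fun e he => by split_ifs <;> simp [hs e he]

lemma pairRate_self {p : V} (hp : ∀ e ∈ s, p ∈ e.1) : pairRate s p p = totalRate s :=
  congrArg List.sum <| List.map_congr_left fun e he => by simp [hp e he]

lemma pairRate_add_pairRate_le (hs : ∀ e ∈ s, 0 ≤ e.2) (p u v : V) :
    pairRate s p u + pairRate s p v ≤ pairRate s u v + totalRate s := by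
  unfold pairRate totalRate
  rw [← List.sum_map_add, ← List.sum_map_add]
  refine List.sum_le_sum fun e he => ?_
  have := hs e he
  by_cases hp : p ∈ e.1 <;> by_cases hu : u ∈ e.1 <;> by_cases hv : v ∈ e.1 <;>
    simp [hp, hu, hv, this]

lemma pairRate_eq_zero_of_forall_notMem {v : V} (h : ∀ e ∈ s, v ∉ e.1) (u : V) :
    pairRate s u v = 0 :=
  List.sum_eq_zero fun x hx => by
    obtain ⟨e, he, rfl⟩ := List.mem_map.1 hx
    simp [h e he]

lemma pairRate_map_fst_of_iff (f : Finset V → Finset V) {u v u' v' : V}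
    (h : ∀ e ∈ s, (u ∈ f e.1 ∧ v ∈ f e.1 ↔ u' ∈ e.1 ∧ v' ∈ e.1)) :
    pairRate (s.map fun e => (f e.1, e.2)) u v = pairRate s u' v' := by
  unfold pairRate
  rw [List.map_map]
  exact congrArg List.sum <| List.map_congr_left fun e he => by simp [h e he]

/-- Nested events: `{p} ∪ K` at the smallest rate `g m`, then recursively on `K \ {m}`. -/
lemma exists_strategy_pairRate_eq (p : V) (K : Finset V) (g : V → ℝ)
    (hg : ∀ y ∈ K, 0 ≤ g y) (M : ℝ) (hM : 0 ≤ M) (hgM : ∀ y ∈ K, g y ≤ M) :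
    ∃ s, ValidStrategy p s ∧
      (∀ y, y ≠ p → pairRate s p y = if y ∈ K then g y else 0) ∧ totalRate s ≤ M := by
  induction K using Finset.strongInduction generalizing g M with
  | H K ih =>
  rcases K.eq_empty_or_nonempty with rfl | hK
  · exact ⟨[], by simp [ValidStrategy], by simp [pairRate], by simpa using hM⟩
  obtain ⟨m, hmK, hmin⟩ := K.exists_min_image g hK
  obtain ⟨s, hs, hrate, htot⟩ := ih (K.erase m) (erase_ssubset hmK) (fun y => g y - g m)
    (fun y hy => sub_nonneg.2 (hmin y (mem_of_mem_erase hy))) (M - g m)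
    (sub_nonneg.2 (hgM m hmK)) (fun y hy => by linarith [hgM y (mem_of_mem_erase hy)])
  have hrate' : ∀ y, y ≠ p → pairRate s p y = if y ∈ K then g y - g m else 0 := by
    intro y hy
    rw [hrate y hy]
    by_cases hym : y = m
    · subst hym; simp [hmK]
    · simp [mem_erase, hym]
  rcases (hg m hmK).eq_or_lt with hm0 | hm0
  · refine ⟨s, hs, fun y hy => ?_, by linarith⟩
    rw [hrate' y hy, ← hm0, sub_zero]
  · refine ⟨(insert p K, g m) :: s, ?_, fun y hy => ?_, by rw [totalRate_cons]; linarith⟩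
    · simpa [ValidStrategy, hm0] using hs
    · rw [pairRate_cons, hrate' y hy]
      by_cases hyK : y ∈ K <;> simp [hyK, hy]

lemma rateBy_eq_pairRate (cfg : Config V) (w u v : V) :
    rateBy cfg w u v = pairRate (cfg w) u v := rfl

variable [Fintype V]

lemma stratCost_eq (b c : ℝ) {p : V} (hp : ∀ e ∈ s, p ∈ e.1) :
    stratCost b c p s = c * ∑ y ∈ univ.erase p, pairRate s p y + b * totalRate s := by
  induction s with
  | nil => simp [stratCost, pairRate]
  | cons f s ih =>
    simp only [List.forall_mem_cons] at hp
    have hf : ∑ y ∈ univ.erase p, (if p ∈ f.1 ∧ y ∈ f.1 then f.2 else 0)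
        = f.2 * #(f.1.erase p) := by
      simp only [hp.1, true_and, ← sum_filter, sum_const, nsmul_eq_mul, mul_comm]
      congr 3
      ext y
      simp [and_comm]
    simp only [stratCost_cons, totalRate_cons, pairRate_cons, sum_add_distrib, hf, ih hp.2]
    ring

lemma stratCost_sub_stratCost (b c : ℝ) {p q : V} {s' : List (Finset V × ℝ)}
    (hp : ∀ e ∈ s, p ∈ e.1) (hp' : ∀ e ∈ s', p ∈ e.1) (hqp : q ≠ p)
    (htot : totalRate s' = totalRate s)
    (hrate : ∀ y, y ≠ q → pairRate s' p y = pairRate s p y) :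
    stratCost b c p s' - stratCost b c p s = c * (pairRate s' p q - pairRate s p q) := by
  have hq : q ∈ univ.erase p := mem_erase.2 ⟨hqp, mem_univ q⟩
  rw [stratCost_eq b c hp, stratCost_eq b c hp', htot, ← sum_erase_add _ _ hq,
    ← sum_erase_add (univ.erase p) _ hq,
    sum_congr rfl fun y hy => hrate y (ne_of_mem_erase hy)]
  ring

end Rates

section Stability

variable {V : Type*} [Fintype V] [DecidableEq V] {a b c : ℝ} {cfg : Config V}

lemma rateBy_le_meet (hv : ConfigValid cfg) (w u v : V) : rateBy cfg w u v ≤ meet cfg u v :=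
  single_le_sum (fun w' _ => pairRate_nonneg (hv w').rate_nonneg u v) (mem_univ w)

lemma meet_update (p : V) (s : List (Finset V × ℝ)) (u v : V) :
    meet (Function.update cfg p s) u v
      = meet cfg u v - pairRate (cfg p) u v + pairRate s u v := by
  simp only [meet, rateBy_eq_pairRate]
  rw [← sum_erase_add _ _ (mem_univ p), ← sum_erase_add univ (fun w => pairRate (cfg w) u v)
    (mem_univ p), sum_congr rfl fun w hw => by rw [Function.update_of_ne (ne_of_mem_erase hw)],
    Function.update_self]
  ring

lemma meet_comm (u v : V) : meet cfg u v = meet cfg v u :=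
  sum_congr rfl fun w _ => pairRate_comm (cfg w) u v

lemma mem_nbrs {u v : V} : u ∈ nbrs cfg v ↔ connected cfg u v := by
  simp [nbrs]

lemma nbrs_sdiff_subset_nbrs_update {p : V} {s : List (Finset V × ℝ)} {S : Finset V}
    (hrate : ∀ y, y ≠ p → y ∉ S → pairRate s p y = pairRate (cfg p) p y) :
    nbrs cfg p \ S ⊆ nbrs (Function.update cfg p s) p := by
  intro y hy
  obtain ⟨hy, hyS⟩ := mem_sdiff.1 hy
  obtain ⟨hyp, hmeet⟩ := mem_nbrs.1 hy
  refine mem_nbrs.2 ⟨hyp, ?_⟩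
  rwa [meet_update, pairRate_comm s, hrate y hyp hyS, pairRate_comm, sub_add_cancel]

lemma Stable.utility_update_le (hst : Stable a b c cfg) {p : V} {s : List (Finset V × ℝ)}
    (hs : ValidStrategy p s) :
    a * #(nbrs (Function.update cfg p s) p) - stratCost b c p s
      ≤ a * #(nbrs cfg p) - stratCost b c p (cfg p) := by
  simpa [utility] using hst.2 p s hs

/-- Otherwise `w` could drop `q` from all her events. -/
lemma Stable.connected_of_pairRate_pos (ha : 0 ≤ a) (hc : 0 < c) (hst : Stable a b c cfg)
    {w q : V} (hqw : q ≠ w) (hpos : 0 < pairRate (cfg w) w q) : connected cfg q w := by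
  by_contra hnc
  have hv := hst.1 w
  set s := (cfg w).map fun e => (e.1.erase q, e.2) with hs_def
  have hs : ValidStrategy w s := by
    rw [hs_def, ValidStrategy, List.forall_mem_map]
    exact fun e he => ⟨mem_erase.2 ⟨hqw.symm, (hv e he).1⟩, (hv e he).2⟩
  have hrate : ∀ y, y ≠ q → pairRate s w y = pairRate (cfg w) w y := fun y hy => by
    rw [hs_def]
    exact pairRate_map_fst_of_iff (·.erase q) fun e _ => by simp [hy, hqw.symm]
  have hq : pairRate s w q = 0 := by
    refine pairRate_eq_zero_of_forall_notMem (fun e he => ?_) w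
    obtain ⟨f, -, rfl⟩ := List.mem_map.1 (hs_def ▸ he)
    exact notMem_erase q f.1
  have hsub : nbrs cfg w ⊆ nbrs (Function.update cfg w s) w := by
    have := nbrs_sdiff_subset_nbrs_update (S := {q}) fun y _ hy => hrate y (by simpa using hy)
    rwa [sdiff_singleton_eq_erase, erase_eq_of_notMem fun h => hnc (mem_nbrs.1 h)] at this
  have hcost :=
    stratCost_sub_stratCost b c hv.mem hs.mem hqw (totalRate_map_fst _ (·.erase q)) hrate
  have hcard : (#(nbrs cfg w) : ℝ) ≤ #(nbrs (Function.update cfg w s) w) := by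
    exact_mod_cast card_le_card hsub
  nlinarith [hst.utility_update_le hs, mul_le_mul_of_nonneg_left hcard ha]

/-- Otherwise `p` could invite `q` to all her events. -/
lemma Stable.le_mul_totalRate_of_not_connected (ha : 0 ≤ a) (hc : 0 < c)
    (hst : Stable a b c cfg) {p q : V} (hqp : q ≠ p) (hnc : ¬connected cfg q p)
    (h : 1 ≤ meet cfg p q + totalRate (cfg p)) : a ≤ c * totalRate (cfg p) := by
  have hv := hst.1 p
  have h0 : pairRate (cfg p) p q = 0 := by
    by_contra hne
    exact hnc (hst.connected_of_pairRate_pos ha hc hqp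
      ((pairRate_nonneg hv.rate_nonneg p q).lt_of_ne' hne))
  set s := (cfg p).map fun e => (insert q e.1, e.2) with hs_def
  have hs : ValidStrategy p s := by
    rw [hs_def, ValidStrategy, List.forall_mem_map]
    exact fun e he => ⟨mem_insert_of_mem (hv e he).1, (hv e he).2⟩
  have hrate : ∀ y, y ≠ q → pairRate s p y = pairRate (cfg p) p y := fun y hy => by
    rw [hs_def]
    exact pairRate_map_fst_of_iff (insert q) fun e he => by simp [hy, (hv e he).1]
  have hq : pairRate s p q = totalRate (cfg p) := by
    rw [hs_def, ← pairRate_self hv.mem]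
    exact pairRate_map_fst_of_iff (insert q) fun e he => by simp [(hv e he).1]
  have hqs : q ∈ nbrs (Function.update cfg p s) p := by
    refine mem_nbrs.2 ⟨hqp, ?_⟩
    rwa [meet_update, pairRate_comm s, hq, pairRate_comm, h0, sub_zero, meet_comm]
  have hsub : insert q (nbrs cfg p) ⊆ nbrs (Function.update cfg p s) p := by
    have := nbrs_sdiff_subset_nbrs_update (S := {q}) fun y _ hy => hrate y (by simpa using hy)
    rw [sdiff_singleton_eq_erase, erase_eq_of_notMem fun h => hnc (mem_nbrs.1 h)] at this
    exact insert_subset hqs this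
  have hcost :=
    stratCost_sub_stratCost b c hv.mem hs.mem hqp (totalRate_map_fst _ (insert q)) hrate
  have hcard : (#(nbrs cfg p) : ℝ) + 1 ≤ #(nbrs (Function.update cfg p s) p) := by
    exact_mod_cast (card_insert_of_notMem fun h => hnc (mem_nbrs.1 h)).symm.le.trans
      (card_le_card hsub)
  rw [hq, h0] at hcost
  nlinarith [hst.utility_update_le hs, mul_le_mul_of_nonneg_left hcard ha]

/-- Deviation: drop the invitees in `S` and realise the remaining pairwise rates by nested events
of total rate `M`. -/
lemma Stable.mul_sum_pairRate_add_le (ha : 0 ≤ a) (hb : 0 ≤ b) (hst : Stable a b c cfg)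
    {p : V} {S : Finset V} (hS : S ⊆ univ.erase p) {M : ℝ} (hM0 : 0 ≤ M)
    (hM : ∀ y ∈ univ.erase p \ S, pairRate (cfg p) p y ≤ M) :
    c * ∑ y ∈ S, pairRate (cfg p) p y + b * (totalRate (cfg p) - M) ≤ a * #S := by
  have hv := hst.1 p
  set K := univ.erase p \ S with hK
  obtain ⟨s, hs, hrate, htot⟩ := exists_strategy_pairRate_eq p K
    (pairRate (cfg p) p) (fun y _ => pairRate_nonneg hv.rate_nonneg p y) M hM0 hM
  have hsub : nbrs cfg p \ S ⊆ nbrs (Function.update cfg p s) p :=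
    nbrs_sdiff_subset_nbrs_update fun y hyp hyS => by
      rw [hrate y hyp, if_pos (by simp [hK, hyp, hyS])]
  have hcard : (#(nbrs cfg p) : ℝ) ≤ #(nbrs (Function.update cfg p s) p) + #S := by
    exact_mod_cast card_le_card_sdiff_add_card.trans (Nat.add_le_add_right (card_le_card hsub) _)
  have hcost : stratCost b c p s = c * ∑ y ∈ K, pairRate (cfg p) p y + b * totalRate s := by
    rw [stratCost_eq b c hs.mem, sum_congr rfl fun y hy => hrate y (ne_of_mem_erase hy),
      sum_ite_mem, inter_eq_right.2 sdiff_subset]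
  have hcost₀ : stratCost b c p (cfg p)
      = c * (∑ y ∈ K, pairRate (cfg p) p y + ∑ y ∈ S, pairRate (cfg p) p y)
        + b * totalRate (cfg p) := by
    rw [stratCost_eq b c hv.mem, sum_sdiff hS]
  nlinarith [hst.utility_update_le hs, mul_le_mul_of_nonneg_left hcard ha,
    mul_le_mul_of_nonneg_left htot hb]

lemma Stable.exists_pairRate_eq_totalRate (ha : 0 ≤ a) (hb : 0 < b) (hst : Stable a b c cfg)
    {p : V} (hne : ∃ y, y ≠ p) :
    ∃ y, y ≠ p ∧ pairRate (cfg p) p y = totalRate (cfg p) := by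
  have hv := hst.1 p
  obtain ⟨y, hy, hmax⟩ := (univ.erase p).exists_max_image (pairRate (cfg p) p)
    (by simpa [Finset.Nonempty] using hne)
  have := hst.mul_sum_pairRate_add_le ha hb.le (empty_subset _)
    (pairRate_nonneg hv.rate_nonneg p y) (by simpa using hmax)
  simp only [sum_empty, mul_zero, zero_add, card_empty, Nat.cast_zero] at this
  refine ⟨y, ne_of_mem_erase hy, le_antisymm (pairRate_le_totalRate hv.rate_nonneg p y) ?_⟩
  nlinarith

lemma Stable.mul_totalRate_lt (ha : 0 ≤ a) (hb : 0 < b) (hst : Stable a b c cfg) {p : V}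
    (hT : 0 < totalRate (cfg p)) : c * totalRate (cfg p) < a := by
  by_contra! hca
  have hv := hst.1 p
  set T := totalRate (cfg p)
  set J := (univ.erase p).filter fun y => pairRate (cfg p) p y = T with hJ
  obtain ⟨M, hM0, hMT, hM⟩ : ∃ M, 0 ≤ M ∧ M < T ∧
      ∀ y ∈ univ.erase p \ J, pairRate (cfg p) p y ≤ M := by
    refine ⟨(insert 0 ((univ.erase p \ J).image (pairRate (cfg p) p))).max' (by simp),
      le_max' _ _ (mem_insert_self _ _), (max'_lt_iff _ _).2 ?_,
      fun y hy => le_max' _ _ (mem_insert_of_mem (mem_image_of_mem _ hy))⟩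
    simp only [mem_insert, mem_image, forall_eq_or_imp, forall_exists_index, and_imp,
      forall_apply_eq_imp_iff₂]
    refine ⟨hT, fun y hy => (pairRate_le_totalRate hv.rate_nonneg p y).lt_of_ne fun h => ?_⟩
    exact (mem_sdiff.1 hy).2 (mem_filter.2 ⟨(mem_sdiff.1 hy).1, h⟩)
  have := hst.mul_sum_pairRate_add_le ha hb.le (filter_subset _ _) hM0 hM
  rw [sum_congr rfl fun y hy => (mem_filter.1 hy).2, sum_const, nsmul_eq_mul] at this
  nlinarith [mul_le_mul_of_nonneg_left hca (Nat.cast_nonneg (α := ℝ) #J)]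

lemma Stable.connected_of_one_le_meet_add_totalRate (ha : 0 < a) (hb : 0 < b) (hc : 0 < c)
    (hst : Stable a b c cfg) {p q : V} (hqp : q ≠ p)
    (h : 1 ≤ meet cfg p q + totalRate (cfg p)) : connected cfg q p := by
  by_contra hnc
  have hle := hst.le_mul_totalRate_of_not_connected ha.le hc hqp hnc h
  have hT : 0 < totalRate (cfg p) := pos_of_mul_pos_right (ha.trans_le hle) hc.le
  exact (hst.mul_totalRate_lt ha.le hb hT).not_ge hle

lemma Stable.mul_rateBy_lt (ha : 0 < a) (hb : 0 < b) (hc : 0 ≤ c) (hst : Stable a b c cfg)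
    (w u v : V) : c * rateBy cfg w u v < a := by
  have hv := hst.1 w
  have hle := pairRate_le_totalRate hv.rate_nonneg u v
  rw [rateBy_eq_pairRate]
  rcases le_or_gt (totalRate (cfg w)) 0 with hT | hT
  · rw [le_antisymm (hle.trans hT) (pairRate_nonneg hv.rate_nonneg u v), mul_zero]
    exact ha
  · exact (mul_le_mul_of_nonneg_left hle hc).trans_lt (hst.mul_totalRate_lt ha.le hb hT)

def IsLocalBridge (G : SimpleGraph V) (u v : V) : Prop :=
  G.Adj u v ∧ ∀ w, ¬(G.Adj u w ∧ G.Adj v w)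

variable {G : SimpleGraph V}

/-- Any third host of an event shared by `u` and `v` would be a common neighbour. -/
lemma Stable.meet_eq_of_isLocalBridge (ha : 0 ≤ a) (hc : 0 < c) (hst : Stable a b c cfg)
    (hsupp : Supports cfg G) {u v : V} (huv : IsLocalBridge G u v) :
    meet cfg u v = rateBy cfg u u v + rateBy cfg v u v := by
  refine Fintype.sum_eq_add u v huv.1.ne fun w ⟨hwu, hwv⟩ => ?_
  have hv := hst.1 w
  rw [rateBy_eq_pairRate]
  by_contra hne
  have hpos := (pairRate_nonneg hv.rate_nonneg u v).lt_of_ne' hne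
  have hu : 0 < pairRate (cfg w) w u := by
    rw [pairRate_comm] at hpos
    exact hpos.trans_le (pairRate_le_pairRate_left hv.rate_nonneg hv.mem v u)
  have hv' : 0 < pairRate (cfg w) w v :=
    hpos.trans_le (pairRate_le_pairRate_left hv.rate_nonneg hv.mem u v)
  exact huv.2 w ⟨(hsupp u w).2 (hst.connected_of_pairRate_pos ha hc hwu.symm hu),
    (hsupp v w).2 (hst.connected_of_pairRate_pos ha hc hwv.symm hv')⟩

lemma Stable.not_isLocalBridge_of_pairRate_eq_totalRate (ha : 0 < a) (hb : 0 < b) (hc : 0 < c)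
    (hst : Stable a b c cfg) (hsupp : Supports cfg G) {u y z : V} (hyz : y ≠ z) (huy : G.Adj u y)
    (hy : pairRate (cfg u) u y = totalRate (cfg u)) : ¬IsLocalBridge G u z := by
  intro huz
  have hmeet := ((hsupp u z).1 huz.1).2
  rw [hst.meet_eq_of_isLocalBridge ha.le hc hsupp huz, rateBy_eq_pairRate,
    rateBy_eq_pairRate] at hmeet
  have hincl := pairRate_add_pairRate_le (hst.1 u).rate_nonneg u z y
  have hzy := rateBy_le_meet hst.1 u z y
  have hz := pairRate_le_totalRate (hst.1 z).rate_nonneg u z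
  rw [rateBy_eq_pairRate] at hzy
  have hyz' := hst.connected_of_one_le_meet_add_totalRate ha hb hc hyz (by linarith)
  exact huz.2 y ⟨huy, ((hsupp y z).2 hyz').symm⟩

end Stability

theorem local_bridge_bounds_general {V : Type*} [Fintype V] [DecidableEq V]
    (a b c : ℝ) (ha : 0 < a) (hb : 0 < b) (hc : 0 < c)
    (cfg : Config V) (hst : Stable a b c cfg)
    (G : SimpleGraph V) (hsupp : Supports cfg G) :
    (a / c ≤ 1 / 2 → ∀ u v : V, G.Adj u v → ∃ w, G.Adj u w ∧ G.Adj v w) ∧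
    (a / c < 1 → ∀ u v x : V, v ≠ x → G.Adj u v → G.Adj u x →
      (∀ w, ¬(G.Adj u w ∧ G.Adj v w)) → (∀ w, ¬(G.Adj u w ∧ G.Adj x w)) → False) := by
  refine ⟨fun hγ u v huv => ?_, fun hγ u v x hvx huv hux hvb hxb => ?_⟩
  · by_contra! hno
    have hmeet := ((hsupp u v).1 huv).2
    rw [hst.meet_eq_of_isLocalBridge ha.le hc hsupp ⟨huv, fun w h => hno w h.1 h.2⟩] at hmeet
    have hu := hst.mul_rateBy_lt ha hb hc.le u u v
    have hv := hst.mul_rateBy_lt ha hb hc.le v u v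
    rw [div_le_div_iff₀ hc two_pos] at hγ
    nlinarith
  · have hTu : 0 < totalRate (cfg u) := by
      by_contra! hT
      have hmeet := ((hsupp u v).1 huv).2
      rw [hst.meet_eq_of_isLocalBridge ha.le hc hsupp ⟨huv, hvb⟩, rateBy_eq_pairRate cfg u]
        at hmeet
      have hu := (pairRate_le_totalRate (hst.1 u).rate_nonneg u v).trans hT
      have hv := hst.mul_rateBy_lt ha hb hc.le v u v
      rw [div_lt_one hc] at hγ
      nlinarith
    obtain ⟨y, hyu, hy⟩ := hst.exists_pairRate_eq_totalRate ha.le hb ⟨v, huv.ne'⟩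
    have huy : G.Adj u y :=
      ((hsupp y u).2 (hst.connected_of_pairRate_pos ha.le hc hyu (hy ▸ hTu))).symm
    rcases eq_or_ne y v with rfl | hyv
    · exact hst.not_isLocalBridge_of_pairRate_eq_totalRate ha hb hc hsupp hvx huy hy ⟨hux, hxb⟩
    · exact hst.not_isLocalBridge_of_pairRate_eq_totalRate ha hb hc hsupp hyv huy hy ⟨huv, hvb⟩

/-- In a network supported by a stable configuration: if `γ = a/c ≤ 1/2`
then no vertex is incident to any local bridge (every edge has a common neighbour); and for
`γ < 1` each vertex is incident to at most one local bridge, i.e. if `u` is connected to two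
distinct agents `v, x`, sharing no common neighbour with either, the configuration is not
stable. -/
theorem local_bridge_bounds {V : Type*} [Fintype V] [DecidableEq V]
    (a b c : ℝ) (ha : 0 < a) (hb : 0 < b) (hc : 0 < c)
    (cfg : Config V) (hst : Stable a b c cfg)
    (G : SimpleGraph V) [DecidableRel G.Adj] (hsupp : Supports cfg G) :
    (a / c ≤ 1 / 2 → ∀ u v : V, G.Adj u v → ∃ w, G.Adj u w ∧ G.Adj v w) ∧
    (a / c < 1 → ∀ u v x : V, v ≠ x → G.Adj u v → G.Adj u x →
      (∀ w, ¬(G.Adj u w ∧ G.Adj v w)) → (∀ w, ¬(G.Adj u w ∧ G.Adj x w)) → False) :=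
  local_bridge_bounds_general a b c ha hb hc cfg hst G hsupp
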